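/- Consider the type (b) move: M' = M̃ + A where M̃ has 0 in the (0,0) entry, M in the lower-right s×s block, and A has A_{00}=A_{11}=−1, A_{01}=A_{10}=1, and 0 elsewhere. Let k ∈ ℤ^s and k' = (0,k) + (−1,1,0,…,0). Then χ_{k'}(x') = χ_k(π_*(x')) + (1/2)(x_0−x_1)(x_0−x_1+1) for all x' ∈ ℤ^{s+1}, where π_*(x') = (x_1,…,x_s). In particular χ_{k'}∘π* = χ_k = χ_{k'}∘ρ*, where π*(x) = (x_1, x_1, x_2,…, x_s) and ρ*(x) = (x_1−1, x_1, x_2,…, x_s). -/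

import Mathlib

open Matrix

/-- The all-ones vector `u = (1,…,1) ∈ ℤ^m`. -/
def uvec (m : ℕ) : Fin m → ℤ := fun _ => 1

/-- The bilinear form `⟨x,y⟩ = xᵀ M y` associated to the matrix `M`. -/
def bform {m : ℕ} (M : Matrix (Fin m) (Fin m) ℤ) (x y : Fin m → ℤ) : ℤ :=
  x ⬝ᵥ M.mulVec y

/-- `χ_k(x) = -(k·x + ⟨x,x⟩)/2`, valued in `ℚ`. -/
def chi {m : ℕ} (M : Matrix (Fin m) (Fin m) ℤ) (k x : Fin m → ℤ) : ℚ :=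
  -(((k ⬝ᵥ x + bform M x x : ℤ) : ℚ)) / 2

/-- `M` as a matrix over `ℚ`. -/
def Mq {m : ℕ} (M : Matrix (Fin m) (Fin m) ℤ) : Matrix (Fin m) (Fin m) ℚ :=
  M.map ((↑) : ℤ → ℚ)

/-- An integer vector viewed in `ℚ^m`. -/
def vq {m : ℕ} (x : Fin m → ℤ) : Fin m → ℚ := fun i => (x i : ℚ)

/-- `Δ_k = -((k - Mu)ᵀ M⁻¹ (k - Mu) + 3s + tr M)/4 ∈ ℚ`. -/
noncomputable def Delta {m : ℕ} (M : Matrix (Fin m) (Fin m) ℤ) (k : Fin m → ℤ) : ℚ :=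
  -((vq (k - M.mulVec (uvec m)) ⬝ᵥ (Mq M)⁻¹.mulVec (vq (k - M.mulVec (uvec m)))
      + 3 * (m : ℚ) + ((Matrix.trace M : ℤ) : ℚ)) / 4)

/-- `ε_k(x) = Δ_k + 2χ_k(x) + ⟨x,u⟩`. -/
noncomputable def eps {m : ℕ} (M : Matrix (Fin m) (Fin m) ℤ) (k x : Fin m → ℤ) : ℚ :=
  Delta M k + 2 * chi M k x + (bform M x (uvec m) : ℚ)

/-- `Θ_k = (k·u - ⟨u,u⟩)/2`, computed in `ℚ`. -/
def Theta {m : ℕ} (M : Matrix (Fin m) (Fin m) ℤ) (k : Fin m → ℤ) : ℚ :=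
  ((k ⬝ᵥ uvec m - bform M (uvec m) (uvec m) : ℤ) : ℚ) / 2

/-- `θ_k(x) = Θ_k + ⟨x,u⟩`. -/
def theta {m : ℕ} (M : Matrix (Fin m) (Fin m) ℤ) (k x : Fin m → ℤ) : ℚ :=
  Theta M k + (bform M x (uvec m) : ℚ)

/-- The `(s+1)×(s+1)` block matrix `M̃` with `0` in the `(0,0)` entry and `M`
in the lower-right `s×s` block. -/
def Mtilde {s : ℕ} (M : Matrix (Fin s) (Fin s) ℤ) : Matrix (Fin (s + 1)) (Fin (s + 1)) ℤ :=
  Matrix.of fun i j =>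
    if hi : i = 0 then 0 else if hj : j = 0 then 0 else M (i.pred hi) (j.pred hj)

/-- The type (a) matrix `A`: `A₀₀ = -1`, `A₀₁ = A₀₂ = A₁₀ = A₂₀ = 1`,
`A₁₁ = A₁₂ = A₂₁ = A₂₂ = -1`, and `0` elsewhere. -/
def AmatA (s : ℕ) : Matrix (Fin (s + 1)) (Fin (s + 1)) ℤ :=
  Matrix.of fun i j =>
    if i.val = 0 ∧ j.val = 0 then -1
    else if (i.val = 0 ∧ (j.val = 1 ∨ j.val = 2)) ∨ ((i.val = 1 ∨ i.val = 2) ∧ j.val = 0) then 1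
    else if (i.val = 1 ∨ i.val = 2) ∧ (j.val = 1 ∨ j.val = 2) then -1
    else 0

/-- The type (b) matrix `A`: `A₀₀ = A₁₁ = -1`, `A₀₁ = A₁₀ = 1`, and `0` elsewhere. -/
def AmatB (s : ℕ) : Matrix (Fin (s + 1)) (Fin (s + 1)) ℤ :=
  Matrix.of fun i j =>
    if (i.val = 0 ∧ j.val = 0) ∨ (i.val = 1 ∧ j.val = 1) then -1
    else if (i.val = 0 ∧ j.val = 1) ∨ (i.val = 1 ∧ j.val = 0) then 1
    else 0

/-- The type (a) spin^c representative `k' = (0,k) + (1,-1,-1,0,…,0)`. -/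
def ka {s : ℕ} (k : Fin s → ℤ) : Fin (s + 1) → ℤ :=
  Fin.cons 0 k + fun i => if i.val = 0 then 1 else if i.val = 1 ∨ i.val = 2 then -1 else 0

/-- The type (b) spin^c representative `k' = (0,k) + (-1,1,0,…,0)`. -/
def kb {s : ℕ} (k : Fin s → ℤ) : Fin (s + 1) → ℤ :=
  Fin.cons 0 k + fun i => if i.val = 0 then -1 else if i.val = 1 then 1 else 0

/-- The projection `π_*(x₀, x₁, …, x_s) = (x₁, …, x_s)`. -/
def pstar {s : ℕ} (x' : Fin (s + 1) → ℤ) : Fin s → ℤ := fun i => x' i.succ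

/-!
Expanding the quadratic form of `M̃ + A` splits off `⟨π_* x', π_* x'⟩` from `M̃` and
`-(x₀ - x₁)²` from `A`, while `k' · x' = k · π_* x' + (x₁ - x₀)`; together the new terms
give `(x₀ - x₁)(x₀ - x₁ + 1) / 2`, which vanishes exactly when `x₀ - x₁ ∈ {0, -1}`,
i.e. on the images of `π^*` and `ρ^*`.
-/

lemma bform_add {m : ℕ} (A B : Matrix (Fin m) (Fin m) ℤ) (x y : Fin m → ℤ) :
    bform (A + B) x y = bform A x y + bform B x y := by
  simp only [bform, add_mulVec, dotProduct_add]

lemma pstar_cons {s : ℕ} (a : ℤ) (x : Fin s → ℤ) : pstar (Fin.cons a x : Fin (s + 1) → ℤ) = x :=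
  Fin.tail_cons (α := fun _ => ℤ) a x

lemma bform_Mtilde {s : ℕ} (M : Matrix (Fin s) (Fin s) ℤ) (x y : Fin (s + 1) → ℤ) :
    bform (Mtilde M) x y = bform M (pstar x) (pstar y) := by
  simp [bform, Mtilde, mulVec, dotProduct, Fin.sum_univ_succ, Fin.succ_ne_zero, pstar]

lemma bform_AmatB_self {t : ℕ} (x : Fin (t + 2) → ℤ) :
    bform (AmatB (t + 1)) x x = -(x 0 - x 1) ^ 2 := by
  simp only [bform, dotProduct, mulVec, AmatB, Fin.val_eq_zero_iff, Int.reduceNeg, of_apply, ite_mul,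
    neg_mul, one_mul, zero_mul, Fin.sum_univ_succ, and_true, Fin.coe_ofNat_eq_mod, Nat.zero_mod,
    zero_ne_one, and_false, or_false, false_or, Fin.succ_ne_zero, Fin.val_succ, Nat.add_eq_right,
    Fin.succ_zero_eq_one, reduceIte, Finset.sum_const_zero, add_zero, mul_zero]
  ring

lemma kb_dotProduct {t : ℕ} (k : Fin (t + 1) → ℤ) (x : Fin (t + 2) → ℤ) :
    kb k ⬝ᵥ x = k ⬝ᵥ pstar x + (x 1 - x 0) := by
  simp only [dotProduct, kb, Fin.val_eq_zero_iff, Int.reduceNeg, Pi.add_apply, add_mul, ite_mul,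
    neg_mul, one_mul, zero_mul, Fin.sum_univ_succ, Fin.cons_zero, reduceIte, zero_add, Fin.cons_succ,
    Fin.succ_ne_zero, Fin.val_succ, Nat.add_eq_right, Fin.succ_zero_eq_one, add_zero, pstar]
  ring

lemma chi_Mtilde_add_AmatB {t : ℕ} (M : Matrix (Fin (t + 1)) (Fin (t + 1)) ℤ)
    (k : Fin (t + 1) → ℤ) (x : Fin (t + 2) → ℤ) :
    chi (Mtilde M + AmatB (t + 1)) (kb k) x =
      chi M k (pstar x) + (((x 0 - x 1) * (x 0 - x 1 + 1) : ℤ) : ℚ) / 2 := by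
  simp only [chi, bform_add, bform_Mtilde, bform_AmatB_self, kb_dotProduct]
  push_cast
  ring

/-- For the type (b) move with `k' = (0,k) + (-1,1,0,…,0)`:
`χ_{k'}(x') = χ_k(π_*(x')) + (1/2)(x₀-x₁)(x₀-x₁+1)`, and in particular
`χ_{k'} ∘ π^* = χ_k = χ_{k'} ∘ ρ^*` where `π^*(x) = (x₁, x₁, x₂, …, x_s)` and
`ρ^*(x) = (x₁-1, x₁, x₂, …, x_s)`. -/
theorem chi_type_b (s : ℕ) (hs : 1 ≤ s) (M : Matrix (Fin s) (Fin s) ℤ)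
    (k : Fin s → ℤ) :
    (∀ x' : Fin (s + 1) → ℤ,
      chi (Mtilde M + AmatB s) (kb k) x' =
        chi M k (pstar x') +
          (((x' ⟨0, by omega⟩ - x' ⟨1, by omega⟩) *
            (x' ⟨0, by omega⟩ - x' ⟨1, by omega⟩ + 1) : ℤ) : ℚ) / 2) ∧
    (∀ x : Fin s → ℤ,
      chi (Mtilde M + AmatB s) (kb k) (Fin.cons (x ⟨0, by omega⟩) x) = chi M k x ∧
      chi (Mtilde M + AmatB s) (kb k) (Fin.cons (x ⟨0, by omega⟩ - 1) x) = chi M k x) := by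
  obtain ⟨t, rfl⟩ : ∃ t, s = t + 1 := ⟨s - 1, by omega⟩
  refine ⟨chi_Mtilde_add_AmatB M k, fun x => ?_⟩
  have cons_one (a : ℤ) : (Fin.cons a x : Fin (t + 2) → ℤ) 1 = x 0 :=
    Fin.cons_one (α := fun _ => ℤ) a x
  constructor <;>
  · rw [Fin.mk_zero, chi_Mtilde_add_AmatB, pstar_cons, Fin.cons_zero, cons_one]
    push_cast
    ring
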